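/- arXiv:1801.06869 — 7 statements merged into one kernel-verified Lean document; each statement's English description precedes it below -/
import Mathlib

section
/- Let γ, λ : [0,∞) → ℝ be C¹ with positive lower bounds, and define G(d) = (1−d)Q₊(d) − (1+d)Q₋(d) with Q±(d) = λ(1±d)γ(1±d)/(λ(1±d)+γ(1±d)). If τ := (γ(1)/λ(1))(λ'(1)−λ(1)) + (λ(1)/γ(1))(γ'(1)−γ(1)) > 0, then G has a root d̄ ∈ (0,1). -/
/-!
With `Q x = λ x γ x / (λ x + γ x)` we have `G d = (1 - d) Q(1 + d) - (1 + d) Q(1 - d)`,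
so `G 0 = 0` and `G 1 = -2 Q(0) < 0`. Moreover
`G'(0) = 2 (Q'(1) - Q(1)) = 2 λ(1) γ(1) τ / (λ(1) + γ(1))²`, so `τ > 0` makes `G` positive
just to the right of `0`, and the intermediate value theorem gives a root in `(0, 1)`.
-/

open Set Topology

theorem exists_mem_Ioo_eq_zero_of_hasDerivAt_pos {f : ℝ → ℝ} {a b c : ℝ} (hab : a < b)
    (hf : ContinuousOn f (Icc a b)) (ha : f a = 0) (hderiv : HasDerivAt f c a) (hc : 0 < c)
    (hb : f b < 0) : ∃ x ∈ Ioo a b, f x = 0 := by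
  have hslope : ∀ᶠ x in 𝓝[>] a, 0 < slope f a x :=
    ((hasDerivAt_iff_tendsto_slope.mp hderiv).mono_left (nhdsGT_le_nhdsNE a)).eventually
      (eventually_gt_nhds hc)
  obtain ⟨x, hx_slope, hax, hxb⟩ := (hslope.and (Ioo_mem_nhdsGT hab)).exists
  have hfx : 0 < f x := pos_of_slope_pos hax hx_slope ha
  obtain ⟨y, hy, hfy⟩ := intermediate_value_Ioo' hxb.le (hf.mono (Icc_subset_Icc hax.le le_rfl))
    ⟨hb, hfx⟩
  exact ⟨y, ⟨hax.trans hy.1, hy.2⟩, hfy⟩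

section ReflectedDifference

variable {Q : ℝ → ℝ}

theorem hasDerivAt_reflected_difference {q : ℝ} (hQ : HasDerivAt Q q 1) :
    HasDerivAt (fun d ↦ (1 - d) * Q (1 + d) - (1 + d) * Q (1 - d)) (2 * (q - Q 1)) 0 := by
  have hplus : HasDerivAt (fun d : ℝ ↦ Q (1 + d)) q 0 := by
    simpa using HasDerivAt.comp_const_add 1 0 (by rwa [add_zero])
  have hminus : HasDerivAt (fun d : ℝ ↦ Q (1 - d)) (-q) 0 := by
    simpa using HasDerivAt.comp_const_sub 1 0 (by rwa [sub_zero])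
  refine ((((hasDerivAt_id' 0).const_sub 1).fun_mul hplus).sub
    (((hasDerivAt_id' 0).const_add 1).fun_mul hminus)).congr_deriv ?_
  norm_num
  ring

theorem continuousOn_reflected_difference (hQ : ContinuousOn Q (Icc 0 2)) :
    ContinuousOn (fun d ↦ (1 - d) * Q (1 + d) - (1 + d) * Q (1 - d)) (Icc 0 1) := by
  have hplus : ContinuousOn (fun d : ℝ ↦ Q (1 + d)) (Icc 0 1) :=
    hQ.comp (by fun_prop) fun d hd ↦ ⟨by linarith [hd.1], by linarith [hd.2]⟩
  have hminus : ContinuousOn (fun d : ℝ ↦ Q (1 - d)) (Icc 0 1) :=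
    hQ.comp (by fun_prop) fun d hd ↦ ⟨by linarith [hd.2], by linarith [hd.1]⟩
  exact ((continuousOn_const.sub continuousOn_id).mul hplus).sub
    ((continuousOn_const.add continuousOn_id).mul hminus)

end ReflectedDifference

theorem hasDerivAt_mul_div_add {f g : ℝ → ℝ} {f' g' x : ℝ} (hf : HasDerivAt f f' x)
    (hg : HasDerivAt g g' x) (hfg : f x + g x ≠ 0) :
    HasDerivAt (fun y ↦ f y * g y / (f y + g y))
      ((f' * g x ^ 2 + f x ^ 2 * g') / (f x + g x) ^ 2) x := by
  refine ((hf.fun_mul hg).fun_div (hf.fun_add hg) hfg).congr_deriv ?_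
  field_simp
  ring

theorem mul_div_add_deriv_sub_eq {l g l' g' : ℝ} (hl : 0 < l) (hg : 0 < g) :
    (l' * g ^ 2 + l ^ 2 * g') / (l + g) ^ 2 - l * g / (l + g) =
      l * g * (g / l * (l' - l) + l / g * (g' - g)) / (l + g) ^ 2 := by
  field_simp
  ring

/-- If τ > 0 then G has a root in (0,1). -/
theorem nonisotropic_steady_state_exists
    (γ lam : ℝ → ℝ) (γlo llo : ℝ) (hγlo : 0 < γlo) (hllo : 0 < llo)
    (hγC : ContDiffOn ℝ 1 γ (Set.Ici 0)) (hlC : ContDiffOn ℝ 1 lam (Set.Ici 0))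
    (hγ : ∀ ρ ≥ (0:ℝ), γlo ≤ γ ρ) (hl : ∀ ρ ≥ (0:ℝ), llo ≤ lam ρ)
    (Qp Qm G : ℝ → ℝ)
    (hQp : ∀ d, Qp d = lam (1 + d) * γ (1 + d) / (lam (1 + d) + γ (1 + d)))
    (hQm : ∀ d, Qm d = lam (1 - d) * γ (1 - d) / (lam (1 - d) + γ (1 - d)))
    (hG : ∀ d, G d = (1 - d) * Qp d - (1 + d) * Qm d)
    (hτ : 0 < γ 1 / lam 1 * (deriv lam 1 - lam 1)
            + lam 1 / γ 1 * (deriv γ 1 - γ 1)) :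
    ∃ d ∈ Set.Ioo (0:ℝ) 1, G d = 0 := by
  set Q : ℝ → ℝ := fun x ↦ lam x * γ x / (lam x + γ x)
  obtain rfl : G = fun d ↦ (1 - d) * Q (1 + d) - (1 + d) * Q (1 - d) :=
    funext fun d ↦ by rw [hG, hQp, hQm]
  have hγ_pos (x : ℝ) (hx : 0 ≤ x) : 0 < γ x := hγlo.trans_le (hγ x hx)
  have hl_pos (x : ℝ) (hx : 0 ≤ x) : 0 < lam x := hllo.trans_le (hl x hx)
  have hQ_cont : ContinuousOn Q (Ici 0) :=
    (hlC.continuousOn.mul hγC.continuousOn).div (hlC.continuousOn.add hγC.continuousOn)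
      fun x hx ↦ (add_pos (hl_pos x hx) (hγ_pos x hx)).ne'
  have hasDerivAt_one {f : ℝ → ℝ} (hf : ContDiffOn ℝ 1 f (Ici 0)) :
      HasDerivAt f (deriv f 1) 1 :=
    ((hf.contDiffAt (Ici_mem_nhds one_pos)).differentiableAt one_ne_zero).hasDerivAt
  have hl1 := hl_pos 1 zero_le_one
  have hγ1 := hγ_pos 1 zero_le_one
  have hQ_deriv := hasDerivAt_mul_div_add (hasDerivAt_one hlC) (hasDerivAt_one hγC)
    (add_pos hl1 hγ1).ne'
  refine exists_mem_Ioo_eq_zero_of_hasDerivAt_pos one_pos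
    (continuousOn_reflected_difference (hQ_cont.mono Icc_subset_Ici_self)) (by simp)
    (hasDerivAt_reflected_difference hQ_deriv) ?_ ?_
  · rw [mul_div_add_deriv_sub_eq hl1 hγ1]
    positivity
  · have hQ0 : 0 < Q 0 := by
      have := hl_pos 0 le_rfl
      have := hγ_pos 0 le_rfl
      positivity
    norm_num
    linarith
end

section
/- Let g, l > 0, b, c ∈ ℝ satisfy 0 < b < gl/(g+l) and c < gl/(g+l), and let k ∈ ℝ. Then the coefficients a₀ = k²(k² + g² + l² + 2l(b−c)), a₁ = 2[k²(g+l−b) + (g+l)(gl−bg−cl)], a₂ = 2k² + (g+l)(g+l−2b) + 2(gl−bg−cl), a₃ = 2(g+l−b) are all positive for k ≠ 0, and moreover p₁ = 2(g+l−b) > 0, p₀ = 2(g+l−2b)[(g+l)(g+l−b) + gl−bg−cl] > 0, and q₁ = 16(g+l−b)²[gl − b(g+l)] > 0. -/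
/-- Positivity of the Routh–Hurwitz coefficients a₀,…,a₃ (for k ≠ 0)
and of p₀, p₁, q₁. -/
theorem routh_hurwitz_coefficients_pos
    (g l b c k : ℝ) (hg : 0 < g) (hl : 0 < l)
    (hb : 0 < b) (hb' : b < g * l / (g + l)) (hc : c < g * l / (g + l)) :
    (k ≠ 0 →
      0 < k ^ 2 * (k ^ 2 + g ^ 2 + l ^ 2 + 2 * l * (b - c)) ∧
      0 < 2 * (k ^ 2 * (g + l - b) + (g + l) * (g * l - b * g - c * l)) ∧
      0 < 2 * k ^ 2 + (g + l) * (g + l - 2 * b) + 2 * (g * l - b * g - c * l) ∧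
      0 < 2 * (g + l - b)) ∧
    0 < 2 * (g + l - b) ∧
    0 < 2 * (g + l - 2 * b) * ((g + l) * (g + l - b) + g * l - b * g - c * l) ∧
    0 < 16 * (g + l - b) ^ 2 * (g * l - b * (g + l)) := by
  have hgl : 0 < g + l := by linarith
  have hb2 : b * (g + l) < g * l := (lt_div_iff₀ hgl).mp hb'
  have hc2 : c * (g + l) < g * l := (lt_div_iff₀ hgl).mp hc
  have hglb : 0 < g + l - b := by nlinarith
  have hgl2b : 0 < g + l - 2 * b := by nlinarith [sq_nonneg (g - l)]
  have hbc : 0 < g * l - b * g - c * l := by nlinarith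
  have hq : 0 < g * l - b * (g + l) := by linarith
  have hsq : 0 < (g + l - b) ^ 2 := by positivity
  have hX : 0 < (g + l) * (g + l - b) + g * l - b * g - c * l := by
    nlinarith [mul_pos hgl hglb]
  refine ⟨fun hk => ?_, by linarith, by nlinarith [mul_pos hgl2b hX], by nlinarith [mul_pos hsq hq]⟩
  have hk2 : 0 < k ^ 2 := by positivity
  have h1 : 0 < g * l * l - c * l * (g + l) := by nlinarith
  refine ⟨?_, by nlinarith [mul_pos hgl hbc, mul_pos hk2 hglb], by nlinarith, by linarith⟩
  have h0 : 0 < k ^ 2 + g ^ 2 + l ^ 2 + 2 * l * (b - c) := by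
    nlinarith [mul_nonneg (sq_nonneg (g - l)) hgl.le, mul_pos (mul_pos hg hg) hl,
      mul_pos hl hb, mul_pos hk2 hgl]
  positivity
end

section
/- Let λ(ρ) = a + bρ² with a, b > 0. If u ≠ v are positive reals with u/λ(u) = v/λ(v), then uv = a/b; moreover for the larger of the two values, say u > √(a/b), the stability condition λ'(u)u < λ(u) fails, i.e. λ'(u)u ≥ λ(u). -/
/-! `Λ(u) = Λ(v)` factors as `(u - v)(a - b u v) = 0`, so distinct values satisfy `u v = a / b`.
For the larger one `b u² > a`, and then `λ'(u) u = 2 b u² > a + b u² = λ(u)`. -/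

theorem div_quadratic_sub_div_quadratic {K : Type*} [Field K] (a b u v : K)
    (hu : a + b * u ^ 2 ≠ 0) (hv : a + b * v ^ 2 ≠ 0) :
    u / (a + b * u ^ 2) - v / (a + b * v ^ 2) =
      (u - v) * (a - b * (u * v)) / ((a + b * u ^ 2) * (a + b * v ^ 2)) := by
  rw [div_sub_div _ _ hu hv]
  ring

theorem mul_eq_div_of_div_quadratic_eq {K : Type*} [Field K] {a b u v : K} (hb : b ≠ 0)
    (hu : a + b * u ^ 2 ≠ 0) (hv : a + b * v ^ 2 ≠ 0) (huv : u ≠ v)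
    (h : u / (a + b * u ^ 2) = v / (a + b * v ^ 2)) : u * v = a / b := by
  have hfactor : (u - v) * (a - b * (u * v)) = 0 := by
    have := div_quadratic_sub_div_quadratic a b u v hu hv
    rw [h, sub_self, eq_comm, div_eq_zero_iff] at this
    exact this.resolve_right (mul_ne_zero hu hv)
  have hprod : a - b * (u * v) = 0 := (mul_eq_zero.mp hfactor).resolve_left (sub_ne_zero.mpr huv)
  rw [eq_div_iff hb]
  linear_combination -hprod

theorem deriv_const_add_const_mul_sq (a b u : ℝ) :
    deriv (fun ρ => a + b * ρ ^ 2) u = 2 * b * u := by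
  simp only [deriv_const_add', deriv_const_mul_field', deriv_pow_field]
  ring

theorem const_add_const_mul_sq_le_two_mul_sq {K : Type*} [Field K] [LinearOrder K]
    [IsStrictOrderedRing K] {a b u : K} (hb : 0 < b) (h : a / b < u ^ 2) :
    a + b * u ^ 2 ≤ 2 * b * u * u := by
  have : a < b * u ^ 2 := by rwa [div_lt_iff₀' hb] at h
  linarith

theorem quadratic_turning_no_stable_pair_general
    (a b u v : ℝ) (ha : 0 < a) (hb : 0 < b)
    (huv : u ≠ v)
    (hΛ : u / (a + b * u ^ 2) = v / (a + b * v ^ 2)) :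
    u * v = a / b ∧
    (Real.sqrt (a / b) < u →
      (a + b * u ^ 2) ≤ deriv (fun ρ => a + b * ρ ^ 2) u * u) := by
  refine ⟨mul_eq_div_of_div_quadratic_eq hb.ne' (by positivity) (by positivity) huv hΛ,
    fun hsqrt => ?_⟩
  have hu : 0 < u := (Real.sqrt_nonneg _).trans_lt hsqrt
  rw [deriv_const_add_const_mul_sq]
  exact const_add_const_mul_sq_le_two_mul_sq hb ((Real.sqrt_lt' hu).mp hsqrt)

/-- For quadratic λ(ρ) = a + bρ², if u ≠ v are positive with
u/λ(u) = v/λ(v), then uv = a/b, and the larger value u > √(a/b) violates the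
stability condition: λ'(u)·u ≥ λ(u). -/
theorem quadratic_turning_no_stable_pair
    (a b u v : ℝ) (ha : 0 < a) (hb : 0 < b)
    (hu : 0 < u) (hv : 0 < v) (huv : u ≠ v)
    (hΛ : u / (a + b * u ^ 2) = v / (a + b * v ^ 2)) :
    u * v = a / b ∧
    (Real.sqrt (a / b) < u →
      (a + b * u ^ 2) ≤ deriv (fun ρ => a + b * ρ ^ 2) u * u) :=
  quadratic_turning_no_stable_pair_general a b u v ha hb huv hΛ
end

section
/- Let λ be as in the anti-symmetry hypothesis: continuous, positive on [0, 2ρ̄], with λ̄ − λ(ρ̄+ρ) = λ(ρ̄−ρ) − λ̲ for all ρ ∈ [0, ρ̄], for constants 0 < λ̲ < λ̄. Let w₁ ∈ (0, 2ρ̄), w₂ = 2ρ̄ − w₁ satisfy w₁/λ(w₁) = w₂/λ(w₂). Define Ω̂(w) = ∫_{ρ̄}^{w} (λ(s)w₁ − λ(w₁)s) ds. Then Ω̂(w₁) = Ω̂(w₂). -/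
/-- For an anti-symmetric turning function and a symmetric pair
w₂ = 2ρ̄ − w₁ with equal Λ-values, the integral condition Ω̂(w₁) = Ω̂(w₂) holds,
where Ω̂(w) = ∫_{ρ̄}^{w} (λ(s)w₁ − λ(w₁)s) ds. -/
theorem antisymmetric_integral_condition
    (lam : ℝ → ℝ) (ρbar llo lhi : ℝ) (hρ : 0 < ρbar)
    (hlC : Continuous lam) (hlpos : ∀ ρ ∈ Set.Icc (0:ℝ) (2 * ρbar), 0 < lam ρ)
    (hlo : 0 < llo) (hlolt : llo < lhi)
    (hanti : ∀ ρ ∈ Set.Icc (0:ℝ) ρbar,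
      lhi - lam (ρbar + ρ) = lam (ρbar - ρ) - llo)
    (w₁ w₂ : ℝ) (hw₁ : w₁ ∈ Set.Ioo 0 (2 * ρbar))
    (hw₂ : w₂ = 2 * ρbar - w₁)
    (hΛ : w₁ / lam w₁ = w₂ / lam w₂) :
    (∫ s in ρbar..w₁, (lam s * w₁ - lam w₁ * s)) =
      ∫ s in ρbar..w₂, (lam s * w₁ - lam w₁ * s) := by
  obtain ⟨hw₁0, hw₁2⟩ := hw₁
  -- general antisymmetry: for u ∈ [0, 2ρbar], lam (2ρbar - u) + lam u = llo + lhi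
  have hsym : ∀ u ∈ Set.Icc (0:ℝ) (2 * ρbar),
      lam (2 * ρbar - u) + lam u = llo + lhi := by
    intro u hu
    rcases le_total u ρbar with h | h
    · have := hanti (ρbar - u) ⟨by linarith, by linarith [hu.1]⟩
      have e1 : ρbar + (ρbar - u) = 2 * ρbar - u := by ring
      have e2 : ρbar - (ρbar - u) = u := by ring
      rw [e1, e2] at this; linarith
    · have := hanti (u - ρbar) ⟨by linarith, by linarith [hu.2]⟩
      have e1 : ρbar + (u - ρbar) = u := by ring
      have e2 : ρbar - (u - ρbar) = 2 * ρbar - u := by ring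
      rw [e1, e2] at this; linarith
  have hw₁Icc : w₁ ∈ Set.Icc (0:ℝ) (2 * ρbar) := ⟨hw₁0.le, hw₁2.le⟩
  have hw₂Icc : w₂ ∈ Set.Icc (0:ℝ) (2 * ρbar) := ⟨by linarith [hw₂ ▸ (by linarith : (0:ℝ) < 2 * ρbar - w₁)], by rw [hw₂]; linarith⟩
  have hl1 : 0 < lam w₁ := hlpos _ hw₁Icc
  have hl2 : 0 < lam w₂ := hlpos _ hw₂Icc
  have hS : lam w₂ + lam w₁ = llo + lhi := by
    have := hsym w₁ hw₁Icc
    rw [← hw₂] at this; exact this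
  have hcross : w₁ * lam w₂ = w₂ * lam w₁ :=
    (div_eq_div_iff hl1.ne' hl2.ne').mp hΛ
  have hkey : (llo + lhi) * w₁ = 2 * ρbar * lam w₁ := by
    have h2 : lam w₂ = llo + lhi - lam w₁ := by linarith
    rw [h2, hw₂] at hcross
    linear_combination hcross
  -- substitution s ↦ 2ρbar - s
  have hsub : (∫ s in ρbar..w₂, (lam s * w₁ - lam w₁ * s)) =
      ∫ x in w₁..ρbar, (lam (2 * ρbar - x) * w₁ - lam w₁ * (2 * ρbar - x)) := by
    rw [intervalIntegral.integral_comp_sub_left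
      (fun s => lam s * w₁ - lam w₁ * s) (2 * ρbar)]
    rw [hw₂]
    congr 1
    ring
  have hEq : Set.EqOn (fun x => lam (2 * ρbar - x) * w₁ - lam w₁ * (2 * ρbar - x))
      (fun x => -(lam x * w₁ - lam w₁ * x)) (Set.uIcc w₁ ρbar) := by
    intro x hx
    have hxIcc : x ∈ Set.Icc (0:ℝ) (2 * ρbar) := by
      rcases Set.mem_uIcc.mp hx with ⟨h1, h2⟩ | ⟨h1, h2⟩ <;>
        constructor <;> nlinarith
    have := hsym x hxIcc
    simp only
    nlinarith
  rw [hsub, intervalIntegral.integral_congr hEq, intervalIntegral.integral_neg,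
    intervalIntegral.integral_symm ρbar w₁, neg_neg]
end

section
/- Suppose Q : ℝ → ℝ is C² and solves Q'' = λ(w₁)Q − λ(Q)w₁ with Q(ζ) → w₁, Q'(ζ) → 0 as ζ → −∞ and Q(ζ) → w_i, Q'(ζ) → 0 as ζ → +∞, where λ is continuous. Then ∫₀^{w₁} (λ(s)w₁ − λ(w₁)s) ds = ∫₀^{w_i} (λ(s)w₁ − λ(w₁)s) ds. -/
/-!
With `f s = λ(s) w₁ - λ(w₁) s` the equation reads `Q'' + f(Q) = 0`; multiplying by `Q'`
shows that the energy `½ (Q')² + ∫₀^Q f` has zero derivative, hence is constant. Since `Q'`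
vanishes at both ends, its limits at `-∞` and `+∞` are `∫₀^{w₁} f` and `∫₀^{wᵢ} f`.
-/

open Filter Topology intervalIntegral

theorem eq_of_tendsto_atBot_atTop_of_hasDerivAt_zero {F : Type*} [NormedAddCommGroup F]
    [NormedSpace ℝ F] {E : ℝ → F} {a b : F}
    (hE : ∀ x, HasDerivAt E 0 x) (ha : Tendsto E atBot (𝓝 a)) (hb : Tendsto E atTop (𝓝 b)) :
    a = b := by
  have hconst : E = fun _ => E 0 := funext fun x =>
    is_const_of_deriv_eq_zero (fun y => (hE y).differentiableAt) (fun y => (hE y).deriv) x 0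
  rw [hconst] at ha hb
  exact (tendsto_nhds_unique ha tendsto_const_nhds).trans
    (tendsto_nhds_unique hb tendsto_const_nhds).symm

theorem hasDerivAt_energy {f Q : ℝ → ℝ} (hf : Continuous f) (hQ : Differentiable ℝ Q)
    (hQ' : Differentiable ℝ (deriv Q)) (ζ : ℝ) :
    HasDerivAt (fun ζ => deriv Q ζ ^ 2 / 2 + ∫ s in (0 : ℝ)..Q ζ, f s)
      (deriv Q ζ * (deriv (deriv Q) ζ + f (Q ζ))) ζ := by
  have hprim : HasDerivAt (fun q => ∫ s in (0 : ℝ)..q, f s) (f (Q ζ)) (Q ζ) :=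
    integral_hasDerivAt_right (hf.intervalIntegrable _ _)
      (hf.stronglyMeasurableAtFilter _ _) hf.continuousAt
  refine ((((hQ' ζ).hasDerivAt.fun_pow 2).div_const 2).add
    (hprim.comp ζ (hQ ζ).hasDerivAt)).congr_deriv ?_
  norm_num
  ring

theorem integral_eq_of_heteroclinic {f Q : ℝ → ℝ} {a b : ℝ} (hf : Continuous f)
    (hQ : Differentiable ℝ Q) (hQ' : Differentiable ℝ (deriv Q))
    (hODE : ∀ ζ, deriv (deriv Q) ζ + f (Q ζ) = 0)
    (hQa : Tendsto Q atBot (𝓝 a)) (hQa' : Tendsto (deriv Q) atBot (𝓝 0))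
    (hQb : Tendsto Q atTop (𝓝 b)) (hQb' : Tendsto (deriv Q) atTop (𝓝 0)) :
    ∫ s in (0 : ℝ)..a, f s = ∫ s in (0 : ℝ)..b, f s := by
  have hprim : Continuous fun q => ∫ s in (0 : ℝ)..q, f s :=
    continuous_primitive (fun _ _ => hf.intervalIntegrable _ _) 0
  have hlim : ∀ {l : Filter ℝ} {c : ℝ}, Tendsto Q l (𝓝 c) → Tendsto (deriv Q) l (𝓝 0) →
      Tendsto (fun ζ => deriv Q ζ ^ 2 / 2 + ∫ s in (0 : ℝ)..Q ζ, f s) l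
        (𝓝 (∫ s in (0 : ℝ)..c, f s)) := fun hQc hQc' => by
    simpa using ((hQc'.pow 2).div_const 2).add ((hprim.tendsto _).comp hQc)
  refine eq_of_tendsto_atBot_atTop_of_hasDerivAt_zero (fun ζ => ?_)
    (hlim hQa hQa') (hlim hQb hQb')
  simpa [hODE ζ] using hasDerivAt_energy hf hQ hQ' ζ

/-- A heteroclinic solution of Q'' = λ(w₁)Q − λ(Q)w₁ connecting
w₁ (at −∞) to w_i (at +∞) with vanishing derivative at ±∞ forces the integral
condition ∫₀^{w₁}(λ(s)w₁ − λ(w₁)s) ds = ∫₀^{w_i}(λ(s)w₁ − λ(w₁)s) ds. -/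
theorem heteroclinic_integral_condition
    (lam Q : ℝ → ℝ) (w₁ wi : ℝ)
    (hlC : Continuous lam) (hQ : ContDiff ℝ 2 Q)
    (hODE : ∀ ζ, deriv (deriv Q) ζ = lam w₁ * Q ζ - lam (Q ζ) * w₁)
    (hQm : Filter.Tendsto Q Filter.atBot (nhds w₁))
    (hQm' : Filter.Tendsto (deriv Q) Filter.atBot (nhds 0))
    (hQp : Filter.Tendsto Q Filter.atTop (nhds wi))
    (hQp' : Filter.Tendsto (deriv Q) Filter.atTop (nhds 0)) :
    (∫ s in (0:ℝ)..w₁, (lam s * w₁ - lam w₁ * s)) =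
      ∫ s in (0:ℝ)..wi, (lam s * w₁ - lam w₁ * s) := by
  refine integral_eq_of_heteroclinic (f := fun s => lam s * w₁ - lam w₁ * s) (by fun_prop)
    (hQ.differentiable (by norm_num)) hQ.differentiable_deriv_two (fun ζ => ?_) hQm hQm' hQp hQp'
  rw [hODE ζ]
  ring
end

section
/- Let λ, γ : [0,∞) → ℝ be continuous and strictly positive. Suppose u(x,t) = P(x−t), u₁(x,t) = P(x−t)A(x+t), v(x,t) = M(x+t), v₁(x,t) = M(x+t)B(x−t) with P, M, A, B differentiable and positive, solve the system ∂ₜu + ∂ₓu = λ(u)v₁ − λ(v)u₁, ∂ₜv − ∂ₓv = λ(v)u₁ − λ(u)v₁, ∂ₜu₁ + ∂ₓu₁ = γ(v)(u−u₁) − λ(v)u₁, ∂ₜv₁ − ∂ₓv₁ = γ(u)(v−v₁) − λ(u)v₁. Then there exists r > 0 such that P(ξ)/(λ(P(ξ))B(ξ)) = r = M(η)/(λ(M(η))A(η)) for all ξ, η, and moreover 2A'(η) = γ(M(η))(1−A(η)) − λ(M(η))A(η) and −2B'(ξ) = γ(P(ξ))(1−B(ξ)) − λ(P(ξ))B(ξ).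 -/
private lemma hdT_sub (f : ℝ → ℝ) (hf : Differentiable ℝ f) (x t : ℝ) :
    HasDerivAt (fun t' => f (x - t')) (-(deriv f (x - t))) t := by
  simpa [Function.comp_def] using ((hf (x - t)).hasDerivAt.comp t ((hasDerivAt_id t).const_sub x))

private lemma hdX_sub (f : ℝ → ℝ) (hf : Differentiable ℝ f) (x t : ℝ) :
    HasDerivAt (fun x' => f (x' - t)) (deriv f (x - t)) x := by
  simpa [Function.comp_def] using ((hf (x - t)).hasDerivAt.comp x ((hasDerivAt_id x).sub_const t))

private lemma hdT_add (f : ℝ → ℝ) (hf : Differentiable ℝ f) (x t : ℝ) :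
    HasDerivAt (fun t' => f (x + t')) (deriv f (x + t)) t := by
  simpa [Function.comp_def] using ((hf (x + t)).hasDerivAt.comp t ((hasDerivAt_id t).const_add x))

private lemma hdX_add (f : ℝ → ℝ) (hf : Differentiable ℝ f) (x t : ℝ) :
    HasDerivAt (fun x' => f (x' + t)) (deriv f (x + t)) x := by
  simpa [Function.comp_def] using ((hf (x + t)).hasDerivAt.comp x ((hasDerivAt_id x).add_const t))

/-- For the full age-structured system, the traveling-wave ansatz
u = P(x−t), u₁ = P(x−t)A(x+t), v = M(x+t), v₁ = M(x+t)B(x−t) forces the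
algebraic condition P/(λ(P)B) = r = M/(λ(M)A) for some r > 0, and the ODEs
2A' = γ(M)(1−A) − λ(M)A and −2B' = γ(P)(1−B) − λ(P)B. -/
theorem full_system_wave_conditions
    (lam γ P M A B : ℝ → ℝ)
    (hlC : Continuous lam) (hγC : Continuous γ)
    (hlpos : ∀ ρ ≥ (0:ℝ), 0 < lam ρ) (hγpos : ∀ ρ ≥ (0:ℝ), 0 < γ ρ)
    (hP : Differentiable ℝ P) (hM : Differentiable ℝ M)
    (hA : Differentiable ℝ A) (hB : Differentiable ℝ B)
    (hPpos : ∀ ξ, 0 < P ξ) (hMpos : ∀ η, 0 < M η)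
    (hApos : ∀ η, 0 < A η) (hBpos : ∀ ξ, 0 < B ξ)
    (heqU : ∀ x t : ℝ,
      deriv (fun t' => P (x - t')) t + deriv (fun x' => P (x' - t)) x =
        lam (P (x - t)) * (M (x + t) * B (x - t)) -
          lam (M (x + t)) * (P (x - t) * A (x + t)))
    (heqV : ∀ x t : ℝ,
      deriv (fun t' => M (x + t')) t - deriv (fun x' => M (x' + t)) x =
        lam (M (x + t)) * (P (x - t) * A (x + t)) -
          lam (P (x - t)) * (M (x + t) * B (x - t)))
    (heqU1 : ∀ x t : ℝ,
      deriv (fun t' => P (x - t') * A (x + t')) t +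
          deriv (fun x' => P (x' - t) * A (x' + t)) x =
        γ (M (x + t)) * (P (x - t) - P (x - t) * A (x + t)) -
          lam (M (x + t)) * (P (x - t) * A (x + t)))
    (heqV1 : ∀ x t : ℝ,
      deriv (fun t' => M (x + t') * B (x - t')) t -
          deriv (fun x' => M (x' + t) * B (x' - t)) x =
        γ (P (x - t)) * (M (x + t) - M (x + t) * B (x - t)) -
          lam (P (x - t)) * (M (x + t) * B (x - t))) :
    (∃ r > (0:ℝ),
      (∀ ξ, P ξ / (lam (P ξ) * B ξ) = r) ∧
      (∀ η, M η / (lam (M η) * A η) = r)) ∧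
    (∀ η, 2 * deriv A η = γ (M η) * (1 - A η) - lam (M η) * A η) ∧
    (∀ ξ, -2 * deriv B ξ = γ (P ξ) * (1 - B ξ) - lam (P ξ) * B ξ) := by
  -- key algebraic identity from the u-equation
  have key : ∀ ξ η : ℝ,
      lam (P ξ) * (M η * B ξ) = lam (M η) * (P ξ * A η) := by
    intro ξ η
    have hx := heqU ((ξ + η) / 2) ((η - ξ) / 2)
    have e1 : (ξ + η) / 2 - (η - ξ) / 2 = ξ := by ring
    have e2 : (ξ + η) / 2 + (η - ξ) / 2 = η := by ring
    rw [e1, e2, (hdT_sub P hP _ _).deriv, (hdX_sub P hP _ _).deriv, e1] at hx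
    linarith
  have hlampos : ∀ ξ, 0 < lam (P ξ) := fun ξ => hlpos _ (le_of_lt (hPpos ξ))
  have hlamMpos : ∀ η, 0 < lam (M η) := fun η => hlpos _ (le_of_lt (hMpos η))
  have hden1 : ∀ ξ, lam (P ξ) * B ξ ≠ 0 :=
    fun ξ => ne_of_gt (mul_pos (hlampos ξ) (hBpos ξ))
  have hden2 : ∀ η, lam (M η) * A η ≠ 0 :=
    fun η => ne_of_gt (mul_pos (hlamMpos η) (hApos η))
  have hc : ∀ ξ η : ℝ, P ξ / (lam (P ξ) * B ξ) = M η / (lam (M η) * A η) := by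
    intro ξ η
    rw [div_eq_div_iff (hden1 ξ) (hden2 η)]
    linear_combination (-1 : ℝ) * key ξ η
  refine ⟨⟨M 0 / (lam (M 0) * A 0),
    div_pos (hMpos 0) (mul_pos (hlamMpos 0) (hApos 0)),
    fun ξ => hc ξ 0, fun η => ((hc 0 η).symm.trans (hc 0 0))⟩, ?_, ?_⟩
  · intro η
    have hx := heqU1 (η / 2) (η / 2)
    have e1 : η / 2 - η / 2 = (0:ℝ) := by ring
    have e2 : η / 2 + η / 2 = η := by ring
    have d1 : HasDerivAt (fun t' => P (η / 2 - t') * A (η / 2 + t'))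
        (-(deriv P (η / 2 - η / 2)) * A (η / 2 + η / 2)
          + P (η / 2 - η / 2) * deriv A (η / 2 + η / 2)) (η / 2) :=
      (hdT_sub P hP _ _).mul (hdT_add A hA _ _)
    have d2 : HasDerivAt (fun x' => P (x' - η / 2) * A (x' + η / 2))
        (deriv P (η / 2 - η / 2) * A (η / 2 + η / 2)
          + P (η / 2 - η / 2) * deriv A (η / 2 + η / 2)) (η / 2) :=
      (hdX_sub P hP _ _).mul (hdX_add A hA _ _)
    rw [d1.deriv, d2.deriv, e1, e2] at hx
    have hP0 := hPpos 0
    have : P 0 * (2 * deriv A η) = P 0 * (γ (M η) * (1 - A η) - lam (M η) * A η) := by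
      ring_nf
      ring_nf at hx
      linarith
    exact mul_left_cancel₀ (ne_of_gt hP0) this
  · intro ξ
    have hx := heqV1 (ξ / 2) (-(ξ / 2))
    have e1 : ξ / 2 - -(ξ / 2) = ξ := by ring
    have e2 : ξ / 2 + -(ξ / 2) = (0:ℝ) := by ring
    have d1 : HasDerivAt (fun t' => M (ξ / 2 + t') * B (ξ / 2 - t'))
        (deriv M (ξ / 2 + -(ξ / 2)) * B (ξ / 2 - -(ξ / 2))
          + M (ξ / 2 + -(ξ / 2)) * -(deriv B (ξ / 2 - -(ξ / 2)))) (-(ξ / 2)) :=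
      (hdT_add M hM _ _).mul (hdT_sub B hB _ _)
    have d2 : HasDerivAt (fun x' => M (x' + -(ξ / 2)) * B (x' - -(ξ / 2)))
        (deriv M (ξ / 2 + -(ξ / 2)) * B (ξ / 2 - -(ξ / 2))
          + M (ξ / 2 + -(ξ / 2)) * deriv B (ξ / 2 - -(ξ / 2))) (ξ / 2) :=
      (hdX_add M hM _ _).mul (hdX_sub B hB _ _)
    rw [d1.deriv, d2.deriv, e1, e2] at hx
    have hM0 := hMpos 0
    have : M 0 * (-2 * deriv B ξ) = M 0 * (γ (P ξ) * (1 - B ξ) - lam (P ξ) * B ξ) := by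
      ring_nf
      ring_nf at hx
      linarith
    exact mul_left_cancel₀ (ne_of_gt hM0) this
end

section
/- Define Λ(ρ) = ρ/λ(ρ) for the piecewise-linear sigmoid λ with parameters 0 < λ̲ < λ̄ and ε ∈ (0, (λ̄−λ̲)/(λ̄+λ̲)). If P₁ ∈ (0, 1−ε) and P₂ ∈ (1+ε, ∞) satisfy Λ(P₁) = Λ(P₂), then (λ̲/λ̄)(1+ε) < P₁ < 1−ε and 1+ε < P₂ < (λ̄/λ̲)(1−ε); in particular every admissible wave value P lies in ((λ̲/λ̄)(1+ε), (λ̄/λ̲)(1−ε)). -/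
/-- For the piecewise-linear sigmoid, paired wave values with
equal Λ = ρ/λ(ρ) on the two outer branches satisfy the stated bounds. -/
theorem piecewise_sigmoid_wave_bounds
    (llo lhi ε : ℝ) (hlo : 0 < llo) (hlt : llo < lhi)
    (hε : ε ∈ Set.Ioo (0:ℝ) ((lhi - llo) / (lhi + llo)))
    (lam : ℝ → ℝ)
    (hlam : ∀ ρ : ℝ, lam ρ =
      if ρ < 1 - ε then llo
      else if ρ < 1 + ε then llo + (ρ - 1 + ε) / (2 * ε) * (lhi - llo)
      else lhi)
    (P₁ P₂ : ℝ) (hP₁ : P₁ ∈ Set.Ioo 0 (1 - ε)) (hP₂ : P₂ ∈ Set.Ioi (1 + ε))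
    (hΛ : P₁ / lam P₁ = P₂ / lam P₂) :
    llo / lhi * (1 + ε) < P₁ ∧ P₁ < 1 - ε ∧
    1 + ε < P₂ ∧ P₂ < lhi / llo * (1 - ε) := by
  obtain ⟨hP₁0, hP₁1⟩ := hP₁
  have hP₂1 : 1 + ε < P₂ := hP₂
  have hεpos : 0 < ε := hε.1
  have h1 : lam P₁ = llo := by rw [hlam]; simp [hP₁1]
  have h2 : lam P₂ = lhi := by
    rw [hlam]
    have h : ¬ P₂ < 1 + ε := by linarith
    have h' : ¬ P₂ < 1 - ε := by linarith
    simp [h, h']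
  rw [h1, h2] at hΛ
  have hhi : 0 < lhi := hlo.trans hlt
  have key : P₁ * lhi = P₂ * llo := by
    field_simp at hΛ; linarith [hΛ]
  refine ⟨?_, hP₁1, hP₂1, ?_⟩
  · rw [div_mul_eq_mul_div, div_lt_iff₀ hhi]
    nlinarith
  · rw [div_mul_eq_mul_div, lt_div_iff₀ hlo]
    nlinarith
end
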